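/- Let P be an SP-graded Kantor pair over 𝕂 and P̌ its reflection. Then P̌ is a Jordan pair if and only if P₀ and P₁ are left ideals of P and both P₀ and P₁ are Jordan pairs (under the restricted products). If moreover P itself is a Jordan pair, then P̌ is a Jordan pair if and only if P₀ and P₁ are ideals of P, in which case P = P₀ ⊕ P₁ is a direct sum of ideals and P̌ = (P₀)^op ⊕ P₁ is a direct sum of ideals. -/

import Mathlib

/-- A Kantor pair over `K`: a pair of modules `(Pm, Pp)` (for `P⁻`, `P⁺`) with trilinear
products `tm : P⁻ × P⁺ × P⁻ → P⁻` and `tp : P⁺ × P⁻ × P⁺ → P⁺` satisfying the Kantor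
identities (K1) and (K2). -/
structure KantorPair (K : Type*) [CommRing K] (Pm Pp : Type*)
    [AddCommGroup Pm] [AddCommGroup Pp] [Module K Pm] [Module K Pp] where
  tm : Pm → Pp → Pm → Pm
  tp : Pp → Pm → Pp → Pp
  tm_add₁ : ∀ x x' y z, tm (x + x') y z = tm x y z + tm x' y z
  tm_smul₁ : ∀ (a : K) x y z, tm (a • x) y z = a • tm x y z
  tm_add₂ : ∀ x y y' z, tm x (y + y') z = tm x y z + tm x y' z
  tm_smul₂ : ∀ (a : K) x y z, tm x (a • y) z = a • tm x y z
  tm_add₃ : ∀ x y z z', tm x y (z + z') = tm x y z + tm x y z'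
  tm_smul₃ : ∀ (a : K) x y z, tm x y (a • z) = a • tm x y z
  tp_add₁ : ∀ x x' y z, tp (x + x') y z = tp x y z + tp x' y z
  tp_smul₁ : ∀ (a : K) x y z, tp (a • x) y z = a • tp x y z
  tp_add₂ : ∀ x y y' z, tp x (y + y') z = tp x y z + tp x y' z
  tp_smul₂ : ∀ (a : K) x y z, tp x (a • y) z = a • tp x y z
  tp_add₃ : ∀ x y z z', tp x y (z + z') = tp x y z + tp x y z'
  tp_smul₃ : ∀ (a : K) x y z, tp x y (a • z) = a • tp x y z
  k1m : ∀ (x z u : Pm) (y w : Pp),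
    tm x y (tm z w u) - tm z w (tm x y u) = tm (tm x y z) w u - tm z (tp y x w) u
  k1p : ∀ (x z u : Pp) (y w : Pm),
    tp x y (tp z w u) - tp z w (tp x y u) = tp (tp x y z) w u - tp z (tm y x w) u
  k2m : ∀ (x z u : Pm) (w v : Pp),
    (tm x (tp w u v) z - tm z (tp w u v) x) + tm u w (tm x v z - tm z v x)
      = tm (tm x w z - tm z w x) v u - tm u v (tm x w z - tm z w x)
  k2p : ∀ (x z u : Pp) (w v : Pm),
    (tp x (tm w u v) z - tp z (tm w u v) x) + tp u w (tp x v z - tp z v x)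
      = tp (tp x w z - tp z w x) v u - tp u v (tp x w z - tp z w x)

namespace KantorPair

variable {K : Type*} [CommRing K] {Pm Pp : Type*}
  [AddCommGroup Pm] [AddCommGroup Pp] [Module K Pm] [Module K Pp]

/-- `Q = (Qm, Qp)` is an ideal of the Kantor pair:
`{P,P,Q} + {P,Q,P} + {Q,P,P} ⊆ Q` on each side. -/
def IsIdealPair (KP : KantorPair K Pm Pp) (Qm : Submodule K Pm) (Qp : Submodule K Pp) : Prop :=
  (∀ (x z : Pm) (y : Pp) (q : Pm), q ∈ Qm → KP.tm x y q ∈ Qm ∧ KP.tm q y z ∈ Qm) ∧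
  (∀ (x z : Pm) (r : Pp), r ∈ Qp → KP.tm x r z ∈ Qm) ∧
  (∀ (x z : Pp) (y : Pm) (q : Pp), q ∈ Qp → KP.tp x y q ∈ Qp ∧ KP.tp q y z ∈ Qp) ∧
  (∀ (x z : Pp) (r : Pm), r ∈ Qm → KP.tp x r z ∈ Qp)

/-- A Kantor pair is simple if some product is nonzero and its only ideals are `0` and `P`. -/
def IsSimplePair (KP : KantorPair K Pm Pp) : Prop :=
  ((∃ x y z, KP.tm x y z ≠ 0) ∨ (∃ x y z, KP.tp x y z ≠ 0)) ∧
  ∀ Qm Qp, KP.IsIdealPair Qm Qp → (Qm = ⊥ ∧ Qp = ⊥) ∨ (Qm = ⊤ ∧ Qp = ⊤)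

/-- `(ωm, ωp)` belongs to the centroid of the Kantor pair. -/
def InCentroid (KP : KantorPair K Pm Pp) (ωm : Pm →ₗ[K] Pm) (ωp : Pp →ₗ[K] Pp) : Prop :=
  (∀ x y z, ωm (KP.tm x y z) = KP.tm (ωm x) y z ∧
      ωm (KP.tm x y z) = KP.tm x (ωp y) z ∧ ωm (KP.tm x y z) = KP.tm x y (ωm z)) ∧
  (∀ x y z, ωp (KP.tp x y z) = KP.tp (ωp x) y z ∧
      ωp (KP.tp x y z) = KP.tp x (ωm y) z ∧ ωp (KP.tp x y z) = KP.tp x y (ωp z))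

/-- The Kantor pair is central: `a ↦ (a • id, a • id)` is an isomorphism of `K`
onto the centroid. -/
def IsCentralPair (KP : KantorPair K Pm Pp) : Prop :=
  (∀ ωm ωp, KP.InCentroid ωm ωp →
    ∃ a : K, ωm = a • (LinearMap.id : Pm →ₗ[K] Pm) ∧ ωp = a • (LinearMap.id : Pp →ₗ[K] Pp)) ∧
  ∀ a : K, a • (LinearMap.id : Pm →ₗ[K] Pm) = 0 →
    a • (LinearMap.id : Pp →ₗ[K] Pp) = 0 → a = 0

/-- A Jordan pair is a Kantor pair with vanishing K-operators, i.e. symmetric products. -/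
def IsJordanPair (KP : KantorPair K Pm Pp) : Prop :=
  (∀ (x z : Pm) (y : Pp), KP.tm x y z = KP.tm z y x) ∧
  (∀ (x z : Pp) (y : Pm), KP.tp x y z = KP.tp z y x)

end KantorPair

/-- A 5-grading (= BC₁-grading) of a Lie algebra `L` over `K`:
an internal direct sum decomposition `L = ⊕_{i ∈ ℤ} L_i` with `⁅L_i, L_j⁆ ⊆ L_{i+j}`
and `L_i = 0` for `|i| > 2`. -/
structure FiveGrading (K : Type*) [CommRing K] (L : Type*) [LieRing L] [LieAlgebra K L] where
  g : ℤ → Submodule K L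
  internal : DirectSum.IsInternal g
  lie_mem : ∀ (i j : ℤ) (x y : L), x ∈ g i → y ∈ g j → ⁅x, y⁆ ∈ g (i + j)
  vanish : ∀ i : ℤ, 2 < |i| → g i = ⊥

/-- `T_L(P) = L_{-1} ⊕ L_1` as a submodule of `L`. -/
def Tsub {K : Type*} [CommRing K] {L : Type*} [LieRing L] [LieAlgebra K L]
    (fg : FiveGrading K L) : Submodule K L :=
  fg.g (-1) ⊔ fg.g 1

/-- The span of all brackets `⁅x, y⁆` with `x ∈ U`, `y ∈ V`. -/
def brkSpan (K : Type*) [CommRing K] {L : Type*} [LieRing L] [LieAlgebra K L]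
    (U V : Submodule K L) : Submodule K L :=
  Submodule.span K {w : L | ∃ x ∈ U, ∃ y ∈ V, w = ⁅x, y⁆}

/-- A 5-graded Lie algebra `L` tightly envelops the Kantor pair `(L_{-1}, L_1)` if it
is generated as a Lie algebra by `T = L_{-1} ⊕ L_1` and `Z(L) ∩ [T, T] = 0`. -/
def Tight (K : Type*) [CommRing K] {L : Type*} [LieRing L] [LieAlgebra K L]
    (fg : FiveGrading K L) : Prop :=
  LieSubalgebra.lieSpan K L ↑(Tsub fg) = ⊤ ∧
  ∀ z ∈ brkSpan K (Tsub fg) (Tsub fg), (∀ u : L, ⁅z, u⁆ = 0) → z = 0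

/-- A 5-graded Lie algebra `(L, fg)` envelops a Kantor pair `KP`: there are identifications
of `P⁻` with `L_{-1}` and `P⁺` with `L_1` under which the products of `KP` are the products
`⁅⁅x, y⁆, z⁆` of `L`. -/
structure Envelops {K : Type*} [CommRing K] {Pm Pp : Type*}
    [AddCommGroup Pm] [AddCommGroup Pp] [Module K Pm] [Module K Pp]
    (KP : KantorPair K Pm Pp)
    {L : Type*} [LieRing L] [LieAlgebra K L] (fg : FiveGrading K L) where
  em : Pm →ₗ[K] L
  ep : Pp →ₗ[K] L
  inj_m : Function.Injective em
  inj_p : Function.Injective ep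
  range_m : LinearMap.range em = fg.g (-1)
  range_p : LinearMap.range ep = fg.g 1
  compat_m : ∀ (x z : Pm) (y : Pp), em (KP.tm x y z) = ⁅⁅em x, ep y⁆, em z⁆
  compat_p : ∀ (x z : Pp) (y : Pm), ep (KP.tp x y z) = ⁅⁅ep x, em y⁆, ep z⁆

/-- A short Peirce grading (SP-grading) of a Kantor pair: a `ℤ`-grading with support
contained in `{0, 1}`. -/
structure SPGrading {K : Type*} [CommRing K] {Pm Pp : Type*}
    [AddCommGroup Pm] [AddCommGroup Pp] [Module K Pm] [Module K Pp]
    (KP : KantorPair K Pm Pp) where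
  Qm : ℤ → Submodule K Pm
  Qp : ℤ → Submodule K Pp
  sup_m : Qm 0 ⊔ Qm 1 = ⊤
  disj_m : Disjoint (Qm 0) (Qm 1)
  sup_p : Qp 0 ⊔ Qp 1 = ⊤
  disj_p : Disjoint (Qp 0) (Qp 1)
  vanish_m : ∀ i : ℤ, i ≠ 0 → i ≠ 1 → Qm i = ⊥
  vanish_p : ∀ i : ℤ, i ≠ 0 → i ≠ 1 → Qp i = ⊥
  grade_m : ∀ (i j k : ℤ) (x : Pm) (y : Pp) (z : Pm),
    x ∈ Qm i → y ∈ Qp j → z ∈ Qm k → KP.tm x y z ∈ Qm (i - j + k)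
  grade_p : ∀ (i j k : ℤ) (x : Pp) (y : Pm) (z : Pp),
    x ∈ Qp i → y ∈ Qm j → z ∈ Qp k → KP.tp x y z ∈ Qp (i - j + k)

/-- `KPc` is the reflection `P̌` of the SP-graded Kantor pair `(KP, SP)`:
`P̌^σ = P₀^{-σ} ⊕ P₁^σ`, with products given by the reflection formula. -/
def IsReflection {K : Type*} [CommRing K] {Pm Pp : Type*}
    [AddCommGroup Pm] [AddCommGroup Pp] [Module K Pm] [Module K Pp]
    (KP : KantorPair K Pm Pp) (SP : SPGrading KP)
    (KPc : KantorPair K ((SP.Qp 0) × (SP.Qm 1)) ((SP.Qm 0) × (SP.Qp 1))) : Prop :=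
  (∀ (a c : (SP.Qm 0) × (SP.Qp 1)) (b : (SP.Qp 0) × (SP.Qm 1)),
    ((KPc.tp a b c).1 : Pm)
      = KP.tm a.1 b.1 c.1 - KP.tm b.2 a.2 c.1 + (KP.tm a.1 c.2 b.2 - KP.tm b.2 c.2 a.1) ∧
    ((KPc.tp a b c).2 : Pp)
      = KP.tp a.2 b.2 c.2 - KP.tp b.1 a.1 c.2 + (KP.tp a.2 c.1 b.1 - KP.tp b.1 c.1 a.2)) ∧
  (∀ (a c : (SP.Qp 0) × (SP.Qm 1)) (b : (SP.Qm 0) × (SP.Qp 1)),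
    ((KPc.tm a b c).1 : Pp)
      = KP.tp a.1 b.1 c.1 - KP.tp b.2 a.2 c.1 + (KP.tp a.1 c.2 b.2 - KP.tp b.2 c.2 a.1) ∧
    ((KPc.tm a b c).2 : Pm)
      = KP.tm a.2 b.2 c.2 - KP.tm b.1 a.1 c.2 + (KP.tm a.2 c.1 b.1 - KP.tm b.1 c.1 a.2))

/-- The degree-`i` component of the SP-grading of the reflection, on the `-` side
(`P̌₀⁻ = P₀⁺`, `P̌₁⁻ = P₁⁻`). -/
def RefGradM {K : Type*} [CommRing K] {Pm Pp : Type*}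
    [AddCommGroup Pm] [AddCommGroup Pp] [Module K Pm] [Module K Pp]
    {KP : KantorPair K Pm Pp} (SP : SPGrading KP) :
    ℤ → Submodule K ((SP.Qp 0) × (SP.Qm 1)) := fun i =>
  if i = 0 then (⊤ : Submodule K (SP.Qp 0)).prod ⊥
  else if i = 1 then (⊥ : Submodule K (SP.Qp 0)).prod ⊤
  else ⊥

/-- The degree-`i` component of the SP-grading of the reflection, on the `+` side
(`P̌₀⁺ = P₀⁻`, `P̌₁⁺ = P₁⁺`). -/
def RefGradP {K : Type*} [CommRing K] {Pm Pp : Type*}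
    [AddCommGroup Pm] [AddCommGroup Pp] [Module K Pm] [Module K Pp]
    {KP : KantorPair K Pm Pp} (SP : SPGrading KP) :
    ℤ → Submodule K ((SP.Qm 0) × (SP.Qp 1)) := fun i =>
  if i = 0 then (⊤ : Submodule K (SP.Qm 0)).prod ⊥
  else if i = 1 then (⊥ : Submodule K (SP.Qm 0)).prod ⊤
  else ⊥

/-- `Q` is a left ideal of the Kantor pair: `{P, P, Q} ⊆ Q` on both sides. -/
def IsLeftIdealPair {K : Type*} [CommRing K] {Pm Pp : Type*}
    [AddCommGroup Pm] [AddCommGroup Pp] [Module K Pm] [Module K Pp]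
    (KP : KantorPair K Pm Pp) (Qm : Submodule K Pm) (Qp : Submodule K Pp) : Prop :=
  (∀ (x : Pm) (y : Pp) (q : Pm), q ∈ Qm → KP.tm x y q ∈ Qm) ∧
  (∀ (x : Pp) (y : Pm) (q : Pp), q ∈ Qp → KP.tp x y q ∈ Qp)

/-- The subpair `(Qm, Qp)` is a Jordan pair under the restricted products. -/
def IsJordanSubpair {K : Type*} [CommRing K] {Pm Pp : Type*}
    [AddCommGroup Pm] [AddCommGroup Pp] [Module K Pm] [Module K Pp]
    (KP : KantorPair K Pm Pp) (Qm : Submodule K Pm) (Qp : Submodule K Pp) : Prop :=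
  (∀ (x z : Pm) (y : Pp), x ∈ Qm → z ∈ Qm → y ∈ Qp → KP.tm x y z = KP.tm z y x) ∧
  (∀ (x z : Pp) (y : Pm), x ∈ Qp → z ∈ Qp → y ∈ Qm → KP.tp x y z = KP.tp z y x)

/-!
For `a, c ∈ P̌⁺` and `b ∈ P̌⁻`, the reflection formula gives
`({a,b,c}^∨ - {c,b,a}^∨)₀ = K(a₀,c₀)b₀ + {a₀,c₁,b₁} - {c₀,a₁,b₁}` and
`({a,b,c}^∨ - {c,b,a}^∨)₁ = K(a₁,c₁)b₁ + {a₁,c₀,b₀} - {c₁,a₀,b₀}`, and similarly on the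
other side. So `P̌` is Jordan iff `P₀`, `P₁` are Jordan and `{P₀,P₁,P₁} = {P₁,P₀,P₀} = 0`
on both sides; by the grading, these vanishing conditions say exactly that `P₁` and `P₀` are
left ideals. If `P` is Jordan, symmetry of the products and the grading make these left ideals
ideals. Conversely, for ideals `P₀`, `P₁` every product with factors from both vanishes, so
the reflection products are computed componentwise and `P̌ = P₀^op ⊕ P₁`.
Throughout, the `+` side is the `-` side of `P^op`, and degree `1` is degree `0` of the grading
`P = P₁ ⊕ P₀`.
-/

namespace KantorPair

variable {K : Type*} [CommRing K] {Pm Pp : Type*}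
  [AddCommGroup Pm] [AddCommGroup Pp] [Module K Pm] [Module K Pp]

def op (KP : KantorPair K Pm Pp) : KantorPair K Pp Pm where
  tm := KP.tp
  tp := KP.tm
  tm_add₁ := KP.tp_add₁
  tm_smul₁ := KP.tp_smul₁
  tm_add₂ := KP.tp_add₂
  tm_smul₂ := KP.tp_smul₂
  tm_add₃ := KP.tp_add₃
  tm_smul₃ := KP.tp_smul₃
  tp_add₁ := KP.tm_add₁
  tp_smul₁ := KP.tm_smul₁
  tp_add₂ := KP.tm_add₂
  tp_smul₂ := KP.tm_smul₂
  tp_add₃ := KP.tm_add₃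
  tp_smul₃ := KP.tm_smul₃
  k1m := KP.k1p
  k1p := KP.k1m
  k2m := KP.k2p
  k2p := KP.k2m

variable (KP : KantorPair K Pm Pp)

@[simp]
lemma op_tm : KP.op.tm = KP.tp := rfl

@[simp]
lemma tm_zero₁ (y : Pp) (z : Pm) : KP.tm 0 y z = 0 := by
  simpa using KP.tm_smul₁ 0 0 y z

@[simp]
lemma tm_zero₂ (x z : Pm) : KP.tm x 0 z = 0 := by
  simpa using KP.tm_smul₂ 0 x 0 z

@[simp]
lemma tm_zero₃ (x : Pm) (y : Pp) : KP.tm x y 0 = 0 := by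
  simpa using KP.tm_smul₃ 0 x y 0

@[simp]
lemma tp_zero₁ (y : Pm) (z : Pp) : KP.tp 0 y z = 0 := KP.op.tm_zero₁ y z

@[simp]
lemma tp_zero₂ (x z : Pp) : KP.tp x 0 z = 0 := KP.op.tm_zero₂ x z

@[simp]
lemma tp_zero₃ (x : Pp) (y : Pm) : KP.tp x y 0 = 0 := KP.op.tm_zero₃ x y

def TripleVanishes (A : Submodule K Pm) (B : Submodule K Pp) (C : Submodule K Pm) : Prop :=
  ∀ x ∈ A, ∀ y ∈ B, ∀ z ∈ C, KP.tm x y z = 0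

variable {KP} {Qm : Submodule K Pm} {Qp : Submodule K Pp}

lemma IsIdealPair.op (h : KP.IsIdealPair Qm Qp) : KP.op.IsIdealPair Qp Qm :=
  ⟨h.2.2.1, h.2.2.2, h.1, h.2.1⟩

lemma IsIdealPair.isLeftIdealPair (h : KP.IsIdealPair Qm Qp) : IsLeftIdealPair KP Qm Qp :=
  ⟨fun x y q hq => (h.1 x x y q hq).1, fun x y q hq => (h.2.2.1 x x y q hq).1⟩

lemma IsIdealPair.tm_mem (h : KP.IsIdealPair Qm Qp) {x z : Pm} {y : Pp}
    (hxyz : x ∈ Qm ∨ y ∈ Qp ∨ z ∈ Qm) : KP.tm x y z ∈ Qm := by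
  rcases hxyz with hx | hy | hz
  · exact (h.1 x z y x hx).2
  · exact h.2.1 x z y hy
  · exact (h.1 x x y z hz).1

lemma tm_eq_zero_of_isIdealPair {Qm' : Submodule K Pm} {Qp' : Submodule K Pp}
    (h : KP.IsIdealPair Qm Qp) (h' : KP.IsIdealPair Qm' Qp') (hdisj : Disjoint Qm Qm')
    {x z : Pm} {y : Pp} (hxyz : x ∈ Qm ∨ y ∈ Qp ∨ z ∈ Qm)
    (hxyz' : x ∈ Qm' ∨ y ∈ Qp' ∨ z ∈ Qm') : KP.tm x y z = 0 :=
  Submodule.disjoint_def.1 hdisj _ (h.tm_mem hxyz) (h'.tm_mem hxyz')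

lemma IsJordanPair.isJordanSubpair (hJ : KP.IsJordanPair) (Qm : Submodule K Pm)
    (Qp : Submodule K Pp) : IsJordanSubpair KP Qm Qp :=
  ⟨fun x z y _ _ _ => hJ.1 x z y, fun x z y _ _ _ => hJ.2 x z y⟩

lemma isIdealPair_ker {Bm Bp : Type*} [AddCommGroup Bm] [AddCommGroup Bp] [Module K Bm]
    [Module K Bp] (πm : Pm →ₗ[K] Bm) (πp : Pp →ₗ[K] Bp)
    (hm : ∀ x y z, πm x = 0 ∨ πp y = 0 ∨ πm z = 0 → πm (KP.tm x y z) = 0)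
    (hp : ∀ x y z, πp x = 0 ∨ πm y = 0 ∨ πp z = 0 → πp (KP.tp x y z) = 0) :
    KP.IsIdealPair (LinearMap.ker πm) (LinearMap.ker πp) := by
  simp only [IsIdealPair, LinearMap.mem_ker]
  exact ⟨fun x z y q hq => ⟨hm _ _ _ (by tauto), hm _ _ _ (by tauto)⟩,
    fun x z r hr => hm _ _ _ (by tauto),
    fun x z y q hq => ⟨hp _ _ _ (by tauto), hp _ _ _ (by tauto)⟩,
    fun x z r hr => hp _ _ _ (by tauto)⟩

end KantorPair

namespace SPGrading

variable {K : Type*} [CommRing K] {Pm Pp : Type*}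
  [AddCommGroup Pm] [AddCommGroup Pp] [Module K Pm] [Module K Pp]
  {KP : KantorPair K Pm Pp} (SP : SPGrading KP)

def op : SPGrading KP.op where
  Qm := SP.Qp
  Qp := SP.Qm
  sup_m := SP.sup_p
  disj_m := SP.disj_p
  sup_p := SP.sup_m
  disj_p := SP.disj_m
  vanish_m := SP.vanish_p
  vanish_p := SP.vanish_m
  grade_m := SP.grade_p
  grade_p := SP.grade_m

def swap : SPGrading KP where
  Qm i := SP.Qm (1 - i)
  Qp i := SP.Qp (1 - i)
  sup_m := by simpa [sup_comm] using SP.sup_m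
  disj_m := by simpa using SP.disj_m.symm
  sup_p := by simpa [sup_comm] using SP.sup_p
  disj_p := by simpa using SP.disj_p.symm
  vanish_m i h0 h1 := SP.vanish_m (1 - i) (by omega) (by omega)
  vanish_p i h0 h1 := SP.vanish_p (1 - i) (by omega) (by omega)
  grade_m i j k x y z hx hy hz := by
    simpa only [show 1 - i - (1 - j) + (1 - k) = 1 - (i - j + k) by ring]
      using SP.grade_m _ _ _ x y z hx hy hz
  grade_p i j k x y z hx hy hz := by
    simpa only [show 1 - i - (1 - j) + (1 - k) = 1 - (i - j + k) by ring]
      using SP.grade_p _ _ _ x y z hx hy hz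

variable {SP}

lemma tm_mem {i j k t : ℤ} {x z : Pm} {y : Pp} (hx : x ∈ SP.Qm i) (hy : y ∈ SP.Qp j)
    (hz : z ∈ SP.Qm k) (ht : i - j + k = t) : KP.tm x y z ∈ SP.Qm t :=
  ht ▸ SP.grade_m i j k x y z hx hy hz

lemma tm_eq_zero {i j k : ℤ} {x z : Pm} {y : Pp} (hx : x ∈ SP.Qm i) (hy : y ∈ SP.Qp j)
    (hz : z ∈ SP.Qm k) (h0 : i - j + k ≠ 0) (h1 : i - j + k ≠ 1) : KP.tm x y z = 0 := by
  simpa [SP.vanish_m _ h0 h1] using SP.grade_m i j k x y z hx hy hz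

lemma eq_zero_of_mem_m {w : Pm} (h0 : w ∈ SP.Qm 0) (h1 : w ∈ SP.Qm 1) : w = 0 :=
  Submodule.disjoint_def.1 SP.disj_m w h0 h1

variable (SP)

lemma exists_eq_add_m (x : Pm) : ∃ x₀ ∈ SP.Qm 0, ∃ x₁ ∈ SP.Qm 1, x = x₀ + x₁ := by
  obtain ⟨x₀, hx₀, x₁, hx₁, h⟩ := Submodule.mem_sup.1 (SP.sup_m ▸ Submodule.mem_top (x := x))
  exact ⟨x₀, hx₀, x₁, hx₁, h.symm⟩

lemma isLeftIdeal_zero_iff :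
    (∀ (x : Pm) (y : Pp) (q : Pm), q ∈ SP.Qm 0 → KP.tm x y q ∈ SP.Qm 0) ↔
      KP.TripleVanishes (SP.Qm 1) (SP.Qp 0) (SP.Qm 0) := by
  constructor
  · intro h x hx y hy z hz
    exact eq_zero_of_mem_m (h x y z hz) (tm_mem hx hy hz (by norm_num))
  · intro hV x y q hq
    obtain ⟨x₀, hx₀, x₁, hx₁, rfl⟩ := SP.exists_eq_add_m x
    obtain ⟨y₀, hy₀, y₁, hy₁, rfl⟩ := SP.op.exists_eq_add_m y
    rw [KP.tm_add₁, KP.tm_add₂, KP.tm_add₂, hV x₁ hx₁ y₀ hy₀ q hq,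
      tm_eq_zero hx₀ hy₁ hq (by norm_num) (by norm_num), add_zero, zero_add]
    exact add_mem (tm_mem hx₀ hy₀ hq (by norm_num)) (tm_mem hx₁ hy₁ hq (by norm_num))

lemma isLeftIdealPair_zero_iff :
    IsLeftIdealPair KP (SP.Qm 0) (SP.Qp 0) ↔
      KP.TripleVanishes (SP.Qm 1) (SP.Qp 0) (SP.Qm 0) ∧
        KP.op.TripleVanishes (SP.Qp 1) (SP.Qm 0) (SP.Qp 0) :=
  and_congr SP.isLeftIdeal_zero_iff SP.op.isLeftIdeal_zero_iff

lemma isLeftIdealPair_one_iff :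
    IsLeftIdealPair KP (SP.Qm 1) (SP.Qp 1) ↔
      KP.TripleVanishes (SP.Qm 0) (SP.Qp 1) (SP.Qm 1) ∧
        KP.op.TripleVanishes (SP.Qp 0) (SP.Qm 1) (SP.Qp 1) :=
  -- `SP.swap.Qm 0 = SP.Qm (1 - 0)` is definitionally `SP.Qm 1`
  SP.swap.isLeftIdealPair_zero_iff

variable {SP}

lemma tm_mem_zero_of_mem_zero (hJ : ∀ (x z : Pm) (y : Pp), KP.tm x y z = KP.tm z y x)
    (h0 : ∀ (x : Pm) (y : Pp) (q : Pm), q ∈ SP.Qm 0 → KP.tm x y q ∈ SP.Qm 0)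
    (h1 : ∀ (x : Pm) (y : Pp) (q : Pm), q ∈ SP.Qm 1 → KP.tm x y q ∈ SP.Qm 1)
    (x z : Pm) {r : Pp} (hr : r ∈ SP.Qp 0) : KP.tm x r z ∈ SP.Qm 0 := by
  -- symmetry puts `{P₀, r, P₁} = {P₁, r, P₀}` in both left ideals, hence in `P₀ ∩ P₁ = 0`
  have mixed : ∀ {a b : Pm}, a ∈ SP.Qm 0 → b ∈ SP.Qm 1 → KP.tm a r b = 0 := fun ha hb =>
    eq_zero_of_mem_m (hJ _ _ _ ▸ h0 _ _ _ ha) (h1 _ _ _ hb)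
  obtain ⟨x₀, hx₀, x₁, hx₁, rfl⟩ := SP.exists_eq_add_m x
  obtain ⟨z₀, hz₀, z₁, hz₁, rfl⟩ := SP.exists_eq_add_m z
  rw [KP.tm_add₁, KP.tm_add₃, KP.tm_add₃, mixed hx₀ hz₁, hJ x₁, mixed hz₀ hx₁,
    tm_eq_zero hx₁ hr hz₁ (by norm_num) (by norm_num), add_zero, add_zero, add_zero]
  exact tm_mem hx₀ hr hz₀ (by norm_num)

lemma isIdealPair_zero (hJ : KP.IsJordanPair) (h0 : IsLeftIdealPair KP (SP.Qm 0) (SP.Qp 0))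
    (h1 : IsLeftIdealPair KP (SP.Qm 1) (SP.Qp 1)) : KP.IsIdealPair (SP.Qm 0) (SP.Qp 0) :=
  ⟨fun _ z y q hq => ⟨h0.1 _ y q hq, hJ.1 q z y ▸ h0.1 z y q hq⟩,
    fun x z _ hr => tm_mem_zero_of_mem_zero hJ.1 h0.1 h1.1 x z hr,
    fun _ z y q hq => ⟨h0.2 _ y q hq, hJ.2 q z y ▸ h0.2 z y q hq⟩,
    fun x z _ hr => tm_mem_zero_of_mem_zero (SP := SP.op) hJ.2 h0.2 h1.2 x z hr⟩

lemma isIdealPair_one (hJ : KP.IsJordanPair) (h0 : IsLeftIdealPair KP (SP.Qm 0) (SP.Qp 0))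
    (h1 : IsLeftIdealPair KP (SP.Qm 1) (SP.Qp 1)) : KP.IsIdealPair (SP.Qm 1) (SP.Qp 1) :=
  isIdealPair_zero (SP := SP.swap) hJ h1 h0

end SPGrading

section RefGrad

variable {K : Type*} [CommRing K] {Pm Pp : Type*}
  [AddCommGroup Pm] [AddCommGroup Pp] [Module K Pm] [Module K Pp]
  {KP : KantorPair K Pm Pp} (SP : SPGrading KP)

lemma refGradM_zero : RefGradM SP 0 = LinearMap.ker (LinearMap.snd K (SP.Qp 0) (SP.Qm 1)) := by
  ext; simp [RefGradM]

lemma refGradP_zero : RefGradP SP 0 = LinearMap.ker (LinearMap.snd K (SP.Qm 0) (SP.Qp 1)) := by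
  ext; simp [RefGradP]

lemma refGradM_one : RefGradM SP 1 = LinearMap.ker (LinearMap.fst K (SP.Qp 0) (SP.Qm 1)) := by
  ext; simp [RefGradM]

lemma refGradP_one : RefGradP SP 1 = LinearMap.ker (LinearMap.fst K (SP.Qm 0) (SP.Qp 1)) := by
  ext; simp [RefGradP]

end RefGrad

namespace IsReflection

open KantorPair

variable {K : Type*} [CommRing K] {Pm Pp : Type*}
  [AddCommGroup Pm] [AddCommGroup Pp] [Module K Pm] [Module K Pp]
  {KP : KantorPair K Pm Pp} {SP : SPGrading KP}
  {KPc : KantorPair K ((SP.Qp 0) × (SP.Qm 1)) ((SP.Qm 0) × (SP.Qp 1))}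

lemma op (hrefl : IsReflection KP SP KPc) : IsReflection KP.op SP.op KPc.op :=
  ⟨hrefl.2, hrefl.1⟩

variable (hrefl : IsReflection KP SP KPc)
include hrefl

lemma tp_fst_sub (a c : (SP.Qm 0) × (SP.Qp 1)) (b : (SP.Qp 0) × (SP.Qm 1)) :
    ((KPc.tp a b c).1 : Pm) - (KPc.tp c b a).1 =
      (KP.tm a.1 b.1 c.1 - KP.tm c.1 b.1 a.1) + (KP.tm a.1 c.2 b.2 - KP.tm c.1 a.2 b.2) := by
  rw [(hrefl.1 a c b).1, (hrefl.1 c a b).1]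
  abel

lemma tp_snd_sub (a c : (SP.Qm 0) × (SP.Qp 1)) (b : (SP.Qp 0) × (SP.Qm 1)) :
    ((KPc.tp a b c).2 : Pp) - (KPc.tp c b a).2 =
      (KP.tp a.2 b.2 c.2 - KP.tp c.2 b.2 a.2) + (KP.tp a.2 c.1 b.1 - KP.tp c.2 a.1 b.1) := by
  rw [(hrefl.1 a c b).2, (hrefl.1 c a b).2]
  abel

lemma tp_fst_symm_iff :
    (∀ a c b, ((KPc.tp a b c).1 : Pm) = (KPc.tp c b a).1) ↔
      (∀ (x z : Pm) (y : Pp), x ∈ SP.Qm 0 → z ∈ SP.Qm 0 → y ∈ SP.Qp 0 →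
        KP.tm x y z = KP.tm z y x) ∧ KP.TripleVanishes (SP.Qm 0) (SP.Qp 1) (SP.Qm 1) := by
  simp only [← sub_eq_zero (b := ((KPc.tp _ _ _).1 : Pm)), hrefl.tp_fst_sub]
  refine ⟨fun h => ⟨fun x z y hx hz hy => ?_, fun x hx y hy z hz => ?_⟩, fun ⟨hJ, hV⟩ a c b => ?_⟩
  · simpa [sub_eq_zero] using h (⟨x, hx⟩, 0) (⟨z, hz⟩, 0) (⟨y, hy⟩, 0)
  · simpa using h (⟨x, hx⟩, 0) (0, ⟨y, hy⟩) (0, ⟨z, hz⟩)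
  · rw [hJ _ _ _ a.1.2 c.1.2 b.1.2, hV _ a.1.2 _ c.2.2 _ b.2.2, hV _ c.1.2 _ a.2.2 _ b.2.2]
    abel

lemma tp_snd_symm_iff :
    (∀ a c b, ((KPc.tp a b c).2 : Pp) = (KPc.tp c b a).2) ↔
      (∀ (x z : Pp) (y : Pm), x ∈ SP.Qp 1 → z ∈ SP.Qp 1 → y ∈ SP.Qm 1 →
        KP.tp x y z = KP.tp z y x) ∧ KP.op.TripleVanishes (SP.Qp 1) (SP.Qm 0) (SP.Qp 0) := by
  simp only [← sub_eq_zero (b := ((KPc.tp _ _ _).2 : Pp)), hrefl.tp_snd_sub, TripleVanishes,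
    op_tm]
  refine ⟨fun h => ⟨fun x z y hx hz hy => ?_, fun x hx y hy z hz => ?_⟩, fun ⟨hJ, hV⟩ a c b => ?_⟩
  · simpa [sub_eq_zero] using h (0, ⟨x, hx⟩) (0, ⟨z, hz⟩) (0, ⟨y, hy⟩)
  · simpa using h (0, ⟨x, hx⟩) (⟨y, hy⟩, 0) (⟨z, hz⟩, 0)
  · rw [hJ _ _ _ a.2.2 c.2.2 b.2.2, hV _ a.2.2 _ c.1.2 _ b.1.2, hV _ c.2.2 _ a.1.2 _ b.1.2]
    abel

lemma tp_symm_iff :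
    (∀ a c b, KPc.tp a b c = KPc.tp c b a) ↔
      ((∀ (x z : Pm) (y : Pp), x ∈ SP.Qm 0 → z ∈ SP.Qm 0 → y ∈ SP.Qp 0 →
        KP.tm x y z = KP.tm z y x) ∧ KP.TripleVanishes (SP.Qm 0) (SP.Qp 1) (SP.Qm 1)) ∧
      ((∀ (x z : Pp) (y : Pm), x ∈ SP.Qp 1 → z ∈ SP.Qp 1 → y ∈ SP.Qm 1 →
        KP.tp x y z = KP.tp z y x) ∧ KP.op.TripleVanishes (SP.Qp 1) (SP.Qm 0) (SP.Qp 0)) := by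
  simp only [Prod.ext_iff, Subtype.ext_iff, forall_and]
  exact and_congr hrefl.tp_fst_symm_iff hrefl.tp_snd_symm_iff

lemma isJordanPair_iff :
    KPc.IsJordanPair ↔
      IsLeftIdealPair KP (SP.Qm 0) (SP.Qp 0) ∧ IsLeftIdealPair KP (SP.Qm 1) (SP.Qp 1) ∧
        IsJordanSubpair KP (SP.Qm 0) (SP.Qp 0) ∧ IsJordanSubpair KP (SP.Qm 1) (SP.Qp 1) := by
  rw [SP.isLeftIdealPair_zero_iff, SP.isLeftIdealPair_one_iff]
  refine (and_congr hrefl.op.tp_symm_iff hrefl.tp_symm_iff).trans ⟨?_, ?_⟩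
  · rintro ⟨⟨⟨hJ₀p, hV₀₁₁p⟩, hJ₁m, hV₁₀₀m⟩, ⟨hJ₀m, hV₀₁₁m⟩, hJ₁p, hV₁₀₀p⟩
    exact ⟨⟨hV₁₀₀m, hV₁₀₀p⟩, ⟨hV₀₁₁m, hV₀₁₁p⟩, ⟨hJ₀m, hJ₀p⟩, ⟨hJ₁m, hJ₁p⟩⟩
  · rintro ⟨⟨hV₁₀₀m, hV₁₀₀p⟩, ⟨hV₀₁₁m, hV₀₁₁p⟩, ⟨hJ₀m, hJ₀p⟩, ⟨hJ₁m, hJ₁p⟩⟩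
    exact ⟨⟨⟨hJ₀p, hV₀₁₁p⟩, hJ₁m, hV₁₀₀m⟩, ⟨hJ₀m, hV₀₁₁m⟩, hJ₁p, hV₁₀₀p⟩

lemma isJordanPair_iff_isIdealPair (hJ : KP.IsJordanPair) :
    KPc.IsJordanPair ↔
      KP.IsIdealPair (SP.Qm 0) (SP.Qp 0) ∧ KP.IsIdealPair (SP.Qm 1) (SP.Qp 1) := by
  rw [hrefl.isJordanPair_iff]
  constructor
  · rintro ⟨hL₀, hL₁, -, -⟩
    exact ⟨SPGrading.isIdealPair_zero hJ hL₀ hL₁, SPGrading.isIdealPair_one hJ hL₀ hL₁⟩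
  · rintro ⟨h₀, h₁⟩
    exact ⟨h₀.isLeftIdealPair, h₁.isLeftIdealPair, hJ.isJordanSubpair _ _,
      hJ.isJordanSubpair _ _⟩

variable (h₀ : KP.IsIdealPair (SP.Qm 0) (SP.Qp 0)) (h₁ : KP.IsIdealPair (SP.Qm 1) (SP.Qp 1))
include h₀ h₁

lemma tp_eq_of_isIdealPair (a c : (SP.Qm 0) × (SP.Qp 1)) (b : (SP.Qp 0) × (SP.Qm 1)) :
    ((KPc.tp a b c).1 : Pm) = KP.tm a.1 b.1 c.1 ∧ ((KPc.tp a b c).2 : Pp) = KP.tp a.2 b.2 c.2 := by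
  have hm : ∀ {x z : Pm} {y : Pp}, x ∈ SP.Qm 0 ∨ y ∈ SP.Qp 0 ∨ z ∈ SP.Qm 0 →
      x ∈ SP.Qm 1 ∨ y ∈ SP.Qp 1 ∨ z ∈ SP.Qm 1 → KP.tm x y z = 0 :=
    tm_eq_zero_of_isIdealPair h₀ h₁ SP.disj_m
  have hp : ∀ {x z : Pp} {y : Pm}, x ∈ SP.Qp 0 ∨ y ∈ SP.Qm 0 ∨ z ∈ SP.Qp 0 →
      x ∈ SP.Qp 1 ∨ y ∈ SP.Qm 1 ∨ z ∈ SP.Qp 1 → KP.tp x y z = 0 :=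
    tm_eq_zero_of_isIdealPair h₀.op h₁.op SP.disj_p
  rw [(hrefl.1 a c b).1, (hrefl.1 a c b).2, hm (.inr (.inr c.1.2)) (.inl b.2.2),
    hm (.inl a.1.2) (.inr (.inr b.2.2)), hm (.inr (.inr a.1.2)) (.inl b.2.2),
    hp (.inl b.1.2) (.inr (.inr c.2.2)), hp (.inr (.inr b.1.2)) (.inl a.2.2),
    hp (.inl b.1.2) (.inr (.inr a.2.2))]
  simp

lemma tm_eq_of_isIdealPair (a c : (SP.Qp 0) × (SP.Qm 1)) (b : (SP.Qm 0) × (SP.Qp 1)) :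
    ((KPc.tm a b c).1 : Pp) = KP.tp a.1 b.1 c.1 ∧ ((KPc.tm a b c).2 : Pm) = KP.tm a.2 b.2 c.2 :=
  hrefl.op.tp_eq_of_isIdealPair h₀.op h₁.op a c b

lemma isIdealPair_refGrad_zero : KPc.IsIdealPair (RefGradM SP 0) (RefGradP SP 0) := by
  rw [refGradM_zero, refGradP_zero]
  refine isIdealPair_ker _ _ (fun a b c h => ?_) (fun a b c h => ?_)
  · simp only [LinearMap.snd_apply, ← Submodule.coe_eq_zero] at h ⊢
    rw [(hrefl.tm_eq_of_isIdealPair h₀ h₁ a c b).2]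
    rcases h with h | h | h <;> simp [h]
  · simp only [LinearMap.snd_apply, ← Submodule.coe_eq_zero] at h ⊢
    rw [(hrefl.tp_eq_of_isIdealPair h₀ h₁ a c b).2]
    rcases h with h | h | h <;> simp [h]

lemma isIdealPair_refGrad_one : KPc.IsIdealPair (RefGradM SP 1) (RefGradP SP 1) := by
  rw [refGradM_one, refGradP_one]
  refine isIdealPair_ker _ _ (fun a b c h => ?_) (fun a b c h => ?_)
  · simp only [LinearMap.fst_apply, ← Submodule.coe_eq_zero] at h ⊢
    rw [(hrefl.tm_eq_of_isIdealPair h₀ h₁ a c b).1]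
    rcases h with h | h | h <;> simp [h]
  · simp only [LinearMap.fst_apply, ← Submodule.coe_eq_zero] at h ⊢
    rw [(hrefl.tp_eq_of_isIdealPair h₀ h₁ a c b).1]
    rcases h with h | h | h <;> simp [h]

end IsReflection

theorem statement13_general {K : Type*} [CommRing K]
    {Pm Pp : Type*} [AddCommGroup Pm] [AddCommGroup Pp] [Module K Pm] [Module K Pp]
    (KP : KantorPair K Pm Pp) (SP : SPGrading KP)
    (KPc : KantorPair K ((SP.Qp 0) × (SP.Qm 1)) ((SP.Qm 0) × (SP.Qp 1)))
    (hrefl : IsReflection KP SP KPc) :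
    (KPc.IsJordanPair ↔
      (IsLeftIdealPair KP (SP.Qm 0) (SP.Qp 0) ∧ IsLeftIdealPair KP (SP.Qm 1) (SP.Qp 1) ∧
       IsJordanSubpair KP (SP.Qm 0) (SP.Qp 0) ∧ IsJordanSubpair KP (SP.Qm 1) (SP.Qp 1))) ∧
    (KP.IsJordanPair →
      (KPc.IsJordanPair ↔
        (KP.IsIdealPair (SP.Qm 0) (SP.Qp 0) ∧ KP.IsIdealPair (SP.Qm 1) (SP.Qp 1))) ∧
      (KPc.IsJordanPair →
        -- P = P₀ ⊕ P₁ is a direct sum of ideals ...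
        KP.IsIdealPair (SP.Qm 0) (SP.Qp 0) ∧ KP.IsIdealPair (SP.Qm 1) (SP.Qp 1) ∧
        -- ... and P̌ = (P₀)^op ⊕ P₁ is a direct sum of ideals
        KPc.IsIdealPair (RefGradM SP 0) (RefGradP SP 0) ∧
        KPc.IsIdealPair (RefGradM SP 1) (RefGradP SP 1))) := by
  refine ⟨hrefl.isJordanPair_iff, fun hJ => ⟨hrefl.isJordanPair_iff_isIdealPair hJ, fun hJc => ?_⟩⟩
  obtain ⟨h₀, h₁⟩ := (hrefl.isJordanPair_iff_isIdealPair hJ).1 hJc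
  exact ⟨h₀, h₁, hrefl.isIdealPair_refGrad_zero h₀ h₁, hrefl.isIdealPair_refGrad_one h₀ h₁⟩

/-- Let `P` be an SP-graded Kantor pair and `P̌` its reflection.  Then
`P̌` is a Jordan pair iff `P₀` and `P₁` are left ideals of `P` which are Jordan pairs.
If moreover `P` is Jordan, then `P̌` is Jordan iff `P₀` and `P₁` are ideals of `P`, in
which case `P = P₀ ⊕ P₁` and `P̌ = (P₀)^op ⊕ P₁` are direct sums of ideals. -/
theorem statement13 {K : Type*} [CommRing K] (h6 : IsUnit (6 : K))
    {Pm Pp : Type*} [AddCommGroup Pm] [AddCommGroup Pp] [Module K Pm] [Module K Pp]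
    (KP : KantorPair K Pm Pp) (SP : SPGrading KP)
    (KPc : KantorPair K ((SP.Qp 0) × (SP.Qm 1)) ((SP.Qm 0) × (SP.Qp 1)))
    (hrefl : IsReflection KP SP KPc) :
    (KPc.IsJordanPair ↔
      (IsLeftIdealPair KP (SP.Qm 0) (SP.Qp 0) ∧ IsLeftIdealPair KP (SP.Qm 1) (SP.Qp 1) ∧
       IsJordanSubpair KP (SP.Qm 0) (SP.Qp 0) ∧ IsJordanSubpair KP (SP.Qm 1) (SP.Qp 1))) ∧
    (KP.IsJordanPair →
      (KPc.IsJordanPair ↔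
        (KP.IsIdealPair (SP.Qm 0) (SP.Qp 0) ∧ KP.IsIdealPair (SP.Qm 1) (SP.Qp 1))) ∧
      (KPc.IsJordanPair →
        -- P = P₀ ⊕ P₁ is a direct sum of ideals ...
        KP.IsIdealPair (SP.Qm 0) (SP.Qp 0) ∧ KP.IsIdealPair (SP.Qm 1) (SP.Qp 1) ∧
        -- ... and P̌ = (P₀)^op ⊕ P₁ is a direct sum of ideals
        KPc.IsIdealPair (RefGradM SP 0) (RefGradP SP 0) ∧
        KPc.IsIdealPair (RefGradM SP 1) (RefGradP SP 1))) :=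
  statement13_general KP SP KPc hrefl
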